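/- In a ball code on a d-dimensional colorable ball B^v in which every (d−1)-simplex is contained in exactly two d-simplices, for every λ ∈ B^v_{d−1} the weight-two operator Z(λ) commutes with all stabilizers, and there exists an edge e ∈ B^v_1 with e ∗ λ a d-simplex, so that Z(λ) anticommutes with the logical operator X(e); hence Z(λ) is a nontrivial logical Z operator and the ball code has distance exactly 2. -/

import Mathlib

/-!
Combinatorial framework for colorable balls in `d`-colexes.

A `d`-colex is a pure `d`-dimensional simplicial complex (faces are finsets of
vertices) whose vertices admit a proper `(d+1)`-coloring.  A colorable `d`-ball
`B^v` consists of the vertex `v` together with all simplices containing it; its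
boundary `∂B^v` consists of the simplices contained in a top simplex of `B^v`
but not containing `v`.  We encode `B^v ∪ ∂B^v` as a `Ball`: a colex in which
every face is contained in a `d`-simplex containing the distinguished vertex.

The associated ball code is the CSS code with a qubit on each `d`-simplex of
`B^v`, one X-stabilizer `X(v)` acting on all qubits, and a Z-stabilizer `Z(μ)`
for each `(d−2)`-simplex `μ ∈ B^v_{d−2}` acting on the `d`-simplices
containing `μ`.
-/

/-- A `d`-dimensional simplicial complex with properly `(d+1)`-colored
vertices. -/
structure ColexComplex (V : Type*) [DecidableEq V] (d : ℕ) where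
  faces : Finset (Finset V)
  nonempty_of_mem : ∀ f ∈ faces, f.Nonempty
  down_closed : ∀ f ∈ faces, ∀ g, g ⊆ f → g.Nonempty → g ∈ faces
  card_le : ∀ f ∈ faces, f.card ≤ d + 1
  col : V → Fin (d + 1)
  proper : ∀ f ∈ faces, ∀ u ∈ f, ∀ w ∈ f, u ≠ w → col u ≠ col w

/-- A colorable `d`-ball `B^v` together with its boundary: a colex with a
distinguished vertex `v` such that every face is contained in some `d`-simplex
containing `v`. -/
structure Ball (V : Type*) [DecidableEq V] (d : ℕ) extends ColexComplex V d where
  v : V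
  v_mem : ({v} : Finset V) ∈ faces
  subset_top : ∀ f ∈ faces, ∃ δ ∈ faces, f ⊆ δ ∧ δ.card = d + 1 ∧ v ∈ δ

namespace Ball

variable {V : Type*} [DecidableEq V] [Fintype V] {d : ℕ}

/-- `B^v_k`: the `k`-simplices of the ball (those containing `v`). -/
def Bk (B : Ball V d) (k : ℕ) : Finset (Finset V) :=
  B.faces.filter fun f => B.v ∈ f ∧ f.card = k + 1

/-- `∂B^v_k`: the `k`-simplices of the boundary (those not containing `v`). -/
def bdryk (B : Ball V d) (k : ℕ) : Finset (Finset V) :=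
  B.faces.filter fun f => B.v ∉ f ∧ f.card = k + 1

/-- The Z-check matrix of the ball code: rows indexed by `(d−2)`-simplices
`μ ∈ B^v_{d−2}`, columns by qubits (`d`-simplices of `B^v`); the entry is `1`
iff `μ ⊆ δ`. -/
def Zmat (B : Ball V d) :
    Matrix {μ // μ ∈ B.Bk (d - 2)} {δ // δ ∈ B.Bk d} (ZMod 2) :=
  fun μ δ => if μ.1 ⊆ δ.1 then 1 else 0

/-- The (Z-part of the) logical operator `X(e)` associated with an edge
`e ∈ B^v_1`: the indicator vector of the `d`-simplices containing `e`. -/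
def xe (B : Ball V d) (e : Finset V) : {δ // δ ∈ B.Bk d} → ZMod 2 :=
  fun δ => if e ⊆ δ.1 then 1 else 0

/-- The weight-two operator `Z(λ)` associated with `λ ∈ B^v_{d−1}`: the
indicator vector of the `d`-simplices containing `λ`. -/
def zlam (B : Ball V d) (lam : Finset V) : {δ // δ ∈ B.Bk d} → ZMod 2 :=
  fun δ => if lam ⊆ δ.1 then 1 else 0

/-- A Pauli with X-part `a` and Z-part `b` commutes with all stabilizers of the
ball code: `a` is orthogonal to every Z-check row and `b` is orthogonal to the
single all-ones X-check `X(v)`. -/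
def InCentralizer (B : Ball V d) (a b : {δ // δ ∈ B.Bk d} → ZMod 2) : Prop :=
  (Zmat B).mulVec a = 0 ∧ (∑ δ, b δ) = 0

/-- A Pauli with X-part `a` and Z-part `b` lies in the stabilizer group of the
ball code: `a` is in the span of the all-ones vector (the X-check `X(v)`) and
`b` is in the span of the Z-check rows. -/
def InStabilizer (B : Ball V d) (a b : {δ // δ ∈ B.Bk d} → ZMod 2) : Prop :=
  a ∈ Submodule.span (ZMod 2)
        ({fun _ => (1 : ZMod 2)} : Set ({δ // δ ∈ B.Bk d} → ZMod 2)) ∧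
  b ∈ Submodule.span (ZMod 2) (Set.range fun μ => (Zmat B) μ)

/-- The weight of a Pauli with X-part `a` and Z-part `b`. -/
def wt (B : Ball V d) (a b : {δ // δ ∈ B.Bk d} → ZMod 2) : ℕ :=
  (Finset.univ.filter fun δ => a δ ≠ 0 ∨ b δ ≠ 0).card

/-- The ball code has distance exactly `2`. -/
def DistanceTwo (B : Ball V d) : Prop :=
  (∀ a b, InCentralizer B a b → ¬ InStabilizer B a b → 2 ≤ wt B a b) ∧
  (∃ a b, InCentralizer B a b ∧ ¬ InStabilizer B a b ∧ wt B a b = 2)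

/-- Each `(d−1)`-simplex of `B^v` lies in exactly two `d`-simplices. -/
def TwoSided (B : Ball V d) : Prop :=
  ∀ lam ∈ B.Bk (d - 1), ((B.Bk d).filter fun δ => lam ⊆ δ).card = 2

/-- The Even Support property: the number of `d`-simplices of `B^v` containing
any given simplex of `B^v` of dimension `< d` is even. -/
def EvenSupport (B : Ball V d) : Prop :=
  ∀ f ∈ B.faces, B.v ∈ f → f.card ≤ d →
    Even (((B.Bk d).filter fun δ => f ⊆ δ).card)

end Ball

open Ball Matrix

/-!
`Z(λ)` is supported on the two `d`-simplices containing `λ`, so it has weight two and even overlap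
with `X(v)`. If `δ` is one of them and `u` its vertex outside `λ`, the edge `e = {v, u}` satisfies
`e ∪ λ = δ`, so `X(e)` meets `Z(λ)` in the single qubit `δ`. By Even Support, `X(e)` commutes with
every check `Z(μ)`, hence is orthogonal to the whole Z-stabilizer space, which therefore does not
contain `Z(λ)`. Finally no nontrivial logical operator has weight one.
-/

theorem Matrix.dotProduct_eq_zero_of_mem_span_rows {m n R : Type*} [Fintype m] [Fintype n]
    [CommRing R] (A : Matrix m n R) {x : n → R} (hx : A *ᵥ x = 0) {b : n → R}
    (hb : b ∈ Submodule.span R (Set.range A.row)) : b ⬝ᵥ x = 0 := by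
  rw [← range_vecMulLinear] at hb
  obtain ⟨c, rfl⟩ := hb
  rw [Matrix.vecMulLinear_apply, ← Matrix.dotProduct_mulVec, hx, dotProduct_zero]

namespace Ball

variable {V : Type*} [DecidableEq V] {d : ℕ} {B : Ball V d}

@[simp]
lemma mem_Bk {k : ℕ} {f : Finset V} :
    f ∈ B.Bk k ↔ f ∈ B.faces ∧ B.v ∈ f ∧ f.card = k + 1 :=
  Finset.mem_filter

lemma mem_Bk_of_subset {k : ℕ} {f g : Finset V} (hf : f ∈ B.faces) (hgf : g ⊆ f)
    (hv : B.v ∈ g) (hg : g.card = k + 1) : g ∈ B.Bk k :=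
  mem_Bk.2 ⟨B.down_closed f hf g hgf ⟨B.v, hv⟩, hv, hg⟩

lemma exists_mem_Bk_subset {k n : ℕ} {δ : Finset V} (hδ : δ ∈ B.Bk n) (hk : k ≤ n) :
    ∃ μ ∈ B.Bk k, μ ⊆ δ := by
  obtain ⟨hδf, hvδ, hδc⟩ := mem_Bk.1 hδ
  obtain ⟨s, hs, hsc⟩ := Finset.exists_subset_card_eq (s := δ.erase B.v) (n := k)
    (by rw [Finset.card_erase_of_mem hvδ, hδc]; omega)
  have hvs : B.v ∉ s := fun h => Finset.notMem_erase B.v δ (hs h)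
  have hsub : insert B.v s ⊆ δ := Finset.insert_subset hvδ (hs.trans (Finset.erase_subset _ _))
  exact ⟨_, mem_Bk_of_subset hδf hsub (Finset.mem_insert_self _ _)
    (by rw [Finset.card_insert_of_notMem hvs, hsc]), hsub⟩

lemma exists_edge_union_eq {lam δ : Finset V} (hδ : δ ∈ B.Bk d) (hv : B.v ∈ lam)
    (hsub : lam ⊆ δ) (hcard : δ.card = lam.card + 1) : ∃ e ∈ B.Bk 1, e ∪ lam = δ := by
  obtain ⟨u, hu⟩ : ∃ u, δ \ lam = {u} :=
    Finset.card_eq_one.1 (by rw [Finset.card_sdiff_of_subset hsub]; omega)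
  have huδ : u ∈ δ := Finset.mem_sdiff.1 (hu ▸ Finset.mem_singleton_self u) |>.1
  have hulam : u ∉ lam := Finset.mem_sdiff.1 (hu ▸ Finset.mem_singleton_self u) |>.2
  have hδ_eq : δ = insert u lam := by
    rw [← Finset.sdiff_union_of_subset hsub, hu, Finset.insert_eq]
  refine ⟨{B.v, u}, mem_Bk_of_subset (mem_Bk.1 hδ).1 ?_ (Finset.mem_insert_self _ _)
    (Finset.card_pair fun h => hulam (h ▸ hv)), ?_⟩
  · exact Finset.insert_subset (hsub hv) (Finset.singleton_subset_iff.2 huδ)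
  · rw [hδ_eq, Finset.insert_union, Finset.insert_eq_of_mem (Finset.mem_union_right _ hv),
      Finset.singleton_union]

lemma filter_Bk_superset_eq_singleton {n : ℕ} {σ : Finset V} (hσ : σ ∈ B.Bk n) :
    (B.Bk n).filter (σ ⊆ ·) = {σ} := by
  ext δ
  simp only [Finset.mem_filter, Finset.mem_singleton]
  refine ⟨fun ⟨hδ, hσδ⟩ => (Finset.eq_of_subset_of_card_le hσδ ?_).symm, ?_⟩
  · rw [(mem_Bk.1 hδ).2.2, (mem_Bk.1 hσ).2.2]
  · rintro rfl
    exact ⟨hσ, subset_rfl⟩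

lemma zlam_mul_zlam (s t : Finset V) (δ : {δ // δ ∈ B.Bk d}) :
    zlam B s δ * zlam B t δ = zlam B (s ∪ t) δ := by
  simp only [zlam, Finset.union_subset_iff]
  split_ifs <;> simp_all

lemma sum_zlam (s : Finset V) :
    ∑ δ, zlam B s δ = (((B.Bk d).filter (s ⊆ ·)).card : ZMod 2) := by
  rw [← Finset.sum_boole]
  exact Finset.sum_coe_sort (B.Bk d) fun δ => if s ⊆ δ then (1 : ZMod 2) else 0

lemma zlam_dotProduct_zlam (s t : Finset V) :
    zlam B s ⬝ᵥ zlam B t = (((B.Bk d).filter (s ∪ t ⊆ ·)).card : ZMod 2) := by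
  simp only [dotProduct, zlam_mul_zlam, sum_zlam]

lemma wt_zero_zlam (s : Finset V) : wt B 0 (zlam B s) = ((B.Bk d).filter (s ⊆ ·)).card := by
  have hsupp : ∀ δ : {δ // δ ∈ B.Bk d}, ((0 : {δ // δ ∈ B.Bk d} → ZMod 2) δ ≠ 0 ∨ zlam B s δ ≠ 0) ↔ s ⊆ δ.1 := by
    intro δ
    simp only [zlam, Pi.zero_apply]
    split_ifs <;> simp_all
  rw [wt, Finset.filter_congr fun δ _ => hsupp δ, Finset.card_filter, Finset.card_filter]
  exact Finset.sum_coe_sort (B.Bk d) fun δ => if s ⊆ δ then 1 else 0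

lemma Zmat_mulVec_xe (hd : 2 ≤ d) (hES : B.EvenSupport) {e : Finset V} (he : e ∈ B.Bk 1) :
    Zmat B *ᵥ xe B e = 0 := by
  funext μ
  obtain ⟨-, hvμ, hμc⟩ := mem_Bk.1 μ.2
  obtain ⟨-, hve, hec⟩ := mem_Bk.1 he
  change zlam B μ.1 ⬝ᵥ zlam B e = 0
  rw [zlam_dotProduct_zlam, ZMod.natCast_eq_zero_iff_even]
  obtain ⟨δ, hδ⟩ | hempty := ((B.Bk d).filter (μ.1 ∪ e ⊆ ·)).eq_empty_or_nonempty.symm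
  · obtain ⟨hδBk, hμeδ⟩ := Finset.mem_filter.1 hδ
    -- `v` lies in both `μ` and `e`, so `μ ∪ e` has dimension at most `(d - 2) + 1`
    have hcard : (μ.1 ∪ e).card ≤ d := by
      have := Finset.card_union_add_card_inter μ.1 e
      have : 1 ≤ (μ.1 ∩ e).card := Finset.card_pos.2 ⟨B.v, Finset.mem_inter.2 ⟨hvμ, hve⟩⟩
      omega
    exact hES _ (B.down_closed δ (mem_Bk.1 hδBk).1 _ hμeδ ⟨B.v, Finset.mem_union_left _ hvμ⟩)
      (Finset.mem_union_left _ hvμ) hcard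
  · exact hempty ▸ Even.zero

lemma eq_zero_of_wt_le_one_of_ne {a b : {δ // δ ∈ B.Bk d} → ZMod 2} {δ δ' : {δ // δ ∈ B.Bk d}}
    (hwt : wt B a b ≤ 1) (hδ : a δ ≠ 0 ∨ b δ ≠ 0) (hne : δ' ≠ δ) : a δ' = 0 ∧ b δ' = 0 := by
  by_contra h
  exact hne (Finset.card_le_one.1 hwt δ' (Finset.mem_filter.2 ⟨Finset.mem_univ _, not_and_or.1 h⟩)
    δ (Finset.mem_filter.2 ⟨Finset.mem_univ _, hδ⟩))

/-- A single `X` error is caught by any `Z(μ)` with `μ` inside its qubit, a single `Z` error by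
`X(v)`. -/
lemma InCentralizer.eq_zero_of_wt_le_one {a b : {δ // δ ∈ B.Bk d} → ZMod 2}
    (hc : InCentralizer B a b) (hwt : wt B a b ≤ 1) : a = 0 ∧ b = 0 := by
  by_contra hne
  obtain ⟨δ, hδ⟩ : ∃ δ, a δ ≠ 0 ∨ b δ ≠ 0 := by
    by_contra! h
    exact hne ⟨funext fun δ => (h δ).1, funext fun δ => (h δ).2⟩
  have hrest : ∀ δ' ≠ δ, a δ' = 0 ∧ b δ' = 0 := fun δ' => eq_zero_of_wt_le_one_of_ne hwt hδ
  have hb : b δ = 0 := by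
    rw [← hc.2, Finset.sum_eq_single δ (fun δ' _ h => (hrest δ' h).2) (by simp)]
  have ha : a δ = 1 := Fin.eq_one_of_ne_zero _ (hδ.resolve_right (· hb))
  obtain ⟨μ, hμ, hμδ⟩ := exists_mem_Bk_subset δ.2 (Nat.sub_le d 2)
  have hrow := congrFun hc.1 ⟨μ, hμ⟩
  rw [Matrix.mulVec, dotProduct, Finset.sum_eq_single δ (fun δ' _ h => by rw [(hrest δ' h).1,
    mul_zero]) (by simp), ha, mul_one, Zmat, if_pos hμδ] at hrow
  exact one_ne_zero hrow

lemma distanceTwo_of_wt_eq_two {a b : {δ // δ ∈ B.Bk d} → ZMod 2} (hc : InCentralizer B a b)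
    (hs : ¬ InStabilizer B a b) (hwt : wt B a b = 2) : B.DistanceTwo := by
  refine ⟨fun a' b' hc' hs' => ?_, a, b, hc, hs, hwt⟩
  by_contra! hlt
  obtain ⟨rfl, rfl⟩ := hc'.eq_zero_of_wt_le_one (Nat.lt_succ_iff.1 hlt)
  exact hs' ⟨Submodule.zero_mem _, Submodule.zero_mem _⟩

end Ball

theorem ball_code_logical_Z_weight_two_general {V : Type*} [DecidableEq V]
    {d : ℕ} (hd : 2 ≤ d) (B : Ball V d)
    (h2 : B.TwoSided) (hES : B.EvenSupport)
    (lam : Finset V) (hlam : lam ∈ B.Bk (d - 1)) :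
    wt B 0 (zlam B lam) = 2 ∧
    InCentralizer B 0 (zlam B lam) ∧
    (∃ e ∈ B.Bk 1, e ∪ lam ∈ B.Bk d ∧
      (∑ δ, xe B e δ * zlam B lam δ) = 1) ∧
    ¬ InStabilizer B 0 (zlam B lam) ∧
    B.DistanceTwo := by
  obtain ⟨-, hvlam, hlamc⟩ := mem_Bk.1 hlam
  obtain ⟨δ, hδ⟩ : ((B.Bk d).filter (lam ⊆ ·)).Nonempty :=
    Finset.card_pos.1 (by rw [h2 lam hlam]; omega)
  obtain ⟨hδBk, hlamδ⟩ := Finset.mem_filter.1 hδ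
  obtain ⟨e, he, rfl⟩ := exists_edge_union_eq hδBk hvlam hlamδ (by rw [(mem_Bk.1 hδBk).2.2]; omega)
  have hwt : wt B 0 (zlam B lam) = 2 := by rw [wt_zero_zlam, h2 lam hlam]
  have hcen : InCentralizer B 0 (zlam B lam) :=
    ⟨Matrix.mulVec_zero _, by rw [sum_zlam, h2 lam hlam]; rfl⟩
  have hodd : ∑ δ, xe B e δ * zlam B lam δ = 1 := by
    change zlam B e ⬝ᵥ zlam B lam = 1
    rw [zlam_dotProduct_zlam, filter_Bk_superset_eq_singleton hδBk, Finset.card_singleton,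
      Nat.cast_one]
  have hstab : ¬ InStabilizer B 0 (zlam B lam) := by
    rintro ⟨-, hspan⟩
    have := (Zmat B).dotProduct_eq_zero_of_mem_span_rows (Zmat_mulVec_xe hd hES he) hspan
    rw [dotProduct_comm] at this
    exact one_ne_zero (hodd.symm.trans this)
  exact ⟨hwt, hcen, ⟨e, he, hδBk, hodd⟩, hstab, distanceTwo_of_wt_eq_two hcen hstab hwt⟩

/-- In a ball code on a `d`-dimensional colorable ball `B^v`
in which every `(d−1)`-simplex lies in exactly two `d`-simplices, for every
`λ ∈ B^v_{d−1}`: the operator `Z(λ)` has weight two; it commutes with all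
stabilizers; there is an edge `e ∈ B^v_1` with `e ∗ λ` a `d`-simplex, and
`Z(λ)` anticommutes with the logical operator `X(e)` (odd overlap); hence
`Z(λ)` is a nontrivial logical Z operator, and the ball code has distance
exactly 2. -/
theorem ball_code_logical_Z_weight_two {V : Type*} [DecidableEq V] [Fintype V]
    {d : ℕ} (hd : 2 ≤ d) (B : Ball V d)
    (h2 : B.TwoSided) (hES : B.EvenSupport)
    (lam : Finset V) (hlam : lam ∈ B.Bk (d - 1)) :
    wt B 0 (zlam B lam) = 2 ∧
    InCentralizer B 0 (zlam B lam) ∧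
    (∃ e ∈ B.Bk 1, e ∪ lam ∈ B.Bk d ∧
      (∑ δ, xe B e δ * zlam B lam δ) = 1) ∧
    ¬ InStabilizer B 0 (zlam B lam) ∧
    B.DistanceTwo :=
  ball_code_logical_Z_weight_two_general hd B h2 hES lam hlam
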